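/- Define vectors in ℓ₁² by x₁ = e₁, x₂ = (1/4)e₁ − (3/4)e₂, x₃ = (1/4)e₁ + (3/4)e₂ and functionals x₁* = e₁*, x₂* = e₁* − e₂*, x₃* = e₁* + e₂*. Then ‖x_j‖₁ = ‖x_j*‖_∞ = x_j*(x_j) = 1 for j = 1,2,3, and Σ_{j=1}^3 x_j*(x) x_j = (3/2)x for all x ∈ ℓ₁². That is, (x_j, x_j*)_{j=1}^3 is a FUNTF of length 3 for ℓ₁². -/

import Mathlib

open scoped BigOperators

/-- `ℓ₁²`: `ℝ²` with the `ℓ₁` norm. -/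
noncomputable abbrev L1two := PiLp 1 (fun _ : Fin 2 => ℝ)
/-- `ℓ_∞²`: `ℝ²` with the sup norm (the dual of `ℓ₁²`). -/
noncomputable abbrev Linftwo := PiLp ⊤ (fun _ : Fin 2 => ℝ)

/-- The duality pairing between `ℓ_∞²` and `ℓ₁²`. -/
noncomputable def pair2 (f : Linftwo) (v : L1two) : ℝ :=
  ∑ i, (WithLp.equiv ⊤ (Fin 2 → ℝ) f) i * (WithLp.equiv 1 (Fin 2 → ℝ) v) i

noncomputable def xv : Fin 3 → L1two := fun j =>
  (WithLp.equiv 1 (Fin 2 → ℝ)).symm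
    (![![1, 0], ![1/4, -(3/4)], ![1/4, 3/4]] j)

noncomputable def xf : Fin 3 → Linftwo := fun j =>
  (WithLp.equiv ⊤ (Fin 2 → ℝ)).symm
    (![![1, 0], ![1, -1], ![1, 1]] j)

lemma norm1 (v : L1two) : ‖v‖ = |v 0| + |v 1| := by
  rw [PiLp.norm_eq_sum (by norm_num)]
  norm_num [Fin.sum_univ_two, Real.norm_eq_abs]

/-- `(x_j, x_j^*)_{j=1}^3` is  a FUNTF of length 3 for `ℓ₁²`. -/
theorem funtf_length_three_ell1_two :
    (∀ j, ‖xv j‖ = 1) ∧ (∀ j, ‖xf j‖ = 1) ∧ (∀ j, pair2 (xf j) (xv j) = 1) ∧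
    (∀ v : L1two, ∑ j, pair2 (xf j) v • xv j = (3/2 : ℝ) • v) := by
  refine ⟨?_, ?_, ?_, ?_⟩
  · intro j
    have h4 : |(1:ℝ)/4| = 1/4 := abs_of_nonneg (by norm_num)
    have h34 : |(3:ℝ)/4| = 3/4 := abs_of_nonneg (by norm_num)
    fin_cases j <;>
      norm_num [xv, norm1, PiLp.toLp_apply, h4, h34]
  · intro j
    fin_cases j <;>
      · rw [xf]
        rw [WithLp.equiv_symm_apply, PiLp.norm_toLp]
        rw [Pi.norm_def]
        simp [Finset.sup_univ_eq_ciSup]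
        refine le_antisymm (ciSup_le fun i => ?_)
          (le_trans (by norm_num) (le_ciSup (Set.Finite.bddAbove (Set.finite_range _)) 0))
        fin_cases i <;> norm_num
  · intro j
    fin_cases j <;> simp [pair2, xv, xf, Fin.sum_univ_two, PiLp.toLp_apply] <;> norm_num
  · intro v
    ext i
    simp [pair2, xv, xf, Fin.sum_univ_three, Fin.sum_univ_two, PiLp.toLp_apply, PiLp.smul_apply]
    fin_cases i <;> simp <;> ring
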